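/- Let f be the Fibonacci sequence with f 0 = f 1 = 1, and let p 0 = (0,0), p k = p (k-1) + P n (k) for 1 ≤ k ≤ 2n+2, where P n is the list [(1,0), (f 0,f 1), …, (f(2n-2), f(2n-1)), (f(2n-1), f(2n)), (f(2n-3), f(2n-1)), …, (f 1, f 2), (0,1)]. Then the polygon with vertex set {p k : 0 ≤ k ≤ 2n+2} ∪ {p(2n+2) - p k : 0 < k < 2n+2} is centrally symmetric about (1/2) p(2n+2), and has exactly 4n + 4 distinct vertices, each an extreme point of the convex hull of this set. -/

import Mathlib

/-!
The hypotheses say `f m = Int.fib (m + 1)`, so the `k`-th edge of the walk is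
`(fib a, fib (a + 1))` with `a = walkIndex n k` running through `-1, 1, 3, …, 2n - 1` and then
`2n, 2n - 2, …, 2, 0`. By d'Ocagne's identity the cross product of the edges with indices `a` and
`a + d` is `-(-1) ^ a * fib d`, so every edge turns strictly left of all earlier ones.

For such a chain `e 1, …, e N` the closed polygon with edges `e 1, …, e N, -e 1, …, -e N` is
strictly convex: along the chain, `v ↦ cross v (e j + e (j + 1))` increases up to the vertex `p j`
and decreases after it (at the two ends use `e 1 - e N` and `e N - e 1`), so it exposes `p j`
among all `2N` vertices, and the opposite functional exposes the reflected vertex `p N - p j`.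
Distinctness of the vertices and their extremality both follow.
-/

open Set

namespace Prod

variable {R : Type*} [CommRing R]

def cross (u v : R × R) : R := u.1 * v.2 - u.2 * v.1

lemma cross_swap (u v : R × R) : cross v u = -cross u v := by
  simp only [cross]; ring

@[simp] lemma cross_self (u : R × R) : cross u u = 0 := by
  simp only [cross]; ring

lemma cross_add_left (u v s : R × R) : cross (u + v) s = cross u s + cross v s := by
  simp only [cross, fst_add, snd_add]; ring

lemma cross_sub_left (u v s : R × R) : cross (u - v) s = cross u s - cross v s := by
  simp only [cross, fst_sub, snd_sub]; ring

lemma cross_add_right (u v w : R × R) : cross u (v + w) = cross u v + cross u w := by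
  simp only [cross, fst_add, snd_add]; ring

lemma cross_sub_right (u v w : R × R) : cross u (v - w) = cross u v - cross u w := by
  simp only [cross, fst_sub, snd_sub]; ring

lemma cross_neg_right (u v : R × R) : cross u (-v) = -cross u v := by
  simp only [cross, fst_neg, snd_neg]; ring

@[simp] lemma cross_zero_left (s : R × R) : cross 0 s = 0 := by
  simp [cross]

lemma cross_prodMap {R' : Type*} [CommRing R'] (φ : R →+* R') (u v : R × R) :
    cross (φ.prodMap φ u) (φ.prodMap φ v) = φ (cross u v) := by
  simp [cross]

lemma isLinearMap_cross_left (s : R × R) : IsLinearMap R (cross · s) where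
  map_add u v := cross_add_left u v s
  map_smul c u := by simp only [cross, smul_fst, smul_snd, smul_eq_mul]; ring

end Prod

lemma notMem_convexHull_of_forall_cross_lt {R : Type*} [CommRing R] [LinearOrder R]
    [IsStrictOrderedRing R] {A : Set (R × R)} {q s : R × R}
    (h : ∀ w ∈ A, w.cross s < q.cross s) : q ∉ convexHull R A :=
  fun hq => lt_irrefl _ <|
    convexHull_min h (convex_halfSpace_lt (Prod.isLinearMap_cross_left s) _) hq

def fibVec (a : ℤ) : ℤ × ℤ := (Int.fib a, Int.fib (a + 1))

lemma Int.fib_pos_of_pos {n : ℤ} (hn : 0 < n) : 0 < Int.fib n := by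
  rw [Int.fib_of_nonneg hn.le]
  exact_mod_cast Nat.fib_pos.2 (by omega)

/-- d'Ocagne's identity. -/
lemma cross_fibVec_fibVec_add (a d : ℤ) :
    (fibVec a).cross (fibVec (a + d)) = -(-1) ^ a.natAbs * Int.fib d := by
  have cassini := Int.fib_succ_mul_fib_pred_sub_fib_sq a
  have hadd := Int.fib_add a d
  have hadd_succ := Int.fib_add a (d + 1)
  have hrec_a := Int.fib_add_two (a - 1)
  have hrec_d := Int.fib_add_two d
  rw [show a - 1 + 2 = a + 1 by ring, sub_add_cancel] at hrec_a
  rw [show d + 1 + 1 = d + 2 by ring] at hadd_succ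
  simp only [Prod.cross, fibVec, add_assoc, hadd, hadd_succ]
  linear_combination
    (-Int.fib d) * cassini - Int.fib a * Int.fib (d + 1) * hrec_a + Int.fib a ^ 2 * hrec_d

lemma cross_fibVec_pos_of_odd {a b : ℤ} (ha : Odd a) (hab : a < b) :
    0 < (fibVec a).cross (fibVec b) := by
  obtain ⟨d, rfl⟩ : ∃ d, b = a + d := ⟨b - a, by ring⟩
  rw [cross_fibVec_fibVec_add, ha.natAbs.neg_one_pow, neg_neg, one_mul]
  exact Int.fib_pos_of_pos (by omega)

lemma cross_fibVec_pos_of_even {a b : ℤ} (hb : Even b) (hba : b < a) :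
    0 < (fibVec a).cross (fibVec b) := by
  obtain ⟨d, rfl⟩ : ∃ d, a = b + d := ⟨a - b, by ring⟩
  rw [Prod.cross_swap, cross_fibVec_fibVec_add, (Int.natAbs_even.2 hb).neg_one_pow, neg_one_mul,
    neg_neg]
  exact Int.fib_pos_of_pos (by omega)

section Polygon

variable {M : Type*} [AddCommGroup M]

def polygonVertices (p : ℕ → M) (N : ℕ) : Set M :=
  p '' Iic N ∪ (fun k => p N - p k) '' Ioo 0 N

variable {p : ℕ → M} {N : ℕ}

lemma sub_mem_polygonVertices (hp0 : p 0 = 0) {v : M} (hv : v ∈ polygonVertices p N) :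
    p N - v ∈ polygonVertices p N := by
  rcases hv with ⟨k, hk, rfl⟩ | ⟨k, hk, rfl⟩
  · rcases Nat.eq_zero_or_pos k with rfl | hk0
    · exact Or.inl ⟨N, mem_Iic.2 le_rfl, by rw [hp0, sub_zero]⟩
    rcases (mem_Iic.1 hk).eq_or_lt with rfl | hkN
    · exact Or.inl ⟨0, mem_Iic.2 (Nat.zero_le k), by rw [hp0, sub_self]⟩
    · exact Or.inr ⟨k, ⟨hk0, hkN⟩, rfl⟩
  · exact Or.inl ⟨k, mem_Iic.2 hk.2.le, (sub_sub_cancel _ _).symm⟩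

lemma image_polygonVertices {M' F : Type*} [AddCommGroup M'] [FunLike F M M']
    [AddMonoidHomClass F M M'] (φ : F) :
    φ '' polygonVertices p N = polygonVertices (φ ∘ p) N := by
  simp only [polygonVertices, image_union, image_image, map_sub, Function.comp_apply]

end Polygon

section ConvexChain

variable {R : Type*} [CommRing R] [LinearOrder R]

def IsConvexChain (e : ℕ → R × R) (N : ℕ) : Prop :=
  ∀ i k, 1 ≤ i → i < k → k ≤ N → 0 < (e i).cross (e k)

variable {e p : ℕ → R × R} {N : ℕ}

namespace IsConvexChain

lemma cross_nonneg (he : IsConvexChain e N) {i k : ℕ} (hi : 1 ≤ i) (hik : i ≤ k)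
    (hk : k ≤ N) : 0 ≤ (e i).cross (e k) := by
  rcases hik.eq_or_lt with rfl | hik
  · rw [Prod.cross_self]
  · exact (he i k hi hik hk).le

lemma map {R' : Type*} [CommRing R'] [LinearOrder R'] (he : IsConvexChain e N) (φ : R →+* R')
    (hφ : StrictMono φ) : IsConvexChain (φ.prodMap φ ∘ e) N := fun i k hi hik hk => by
  simpa only [Function.comp_apply, Prod.cross_prodMap, map_zero] using hφ (he i k hi hik hk)

variable [IsStrictOrderedRing R]

lemma cross_sub_neg (he : IsConvexChain e N) (hN : 1 < N) {i : ℕ} (hi : 1 ≤ i) (hiN : i ≤ N) :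
    (e i).cross (e 1 - e N) < 0 := by
  rw [Prod.cross_sub_right, Prod.cross_swap (e 1)]
  have hfirst := he.cross_nonneg le_rfl hi hiN
  have hlast := he.cross_nonneg hi hiN le_rfl
  rcases hi.eq_or_lt with rfl | hi'
  · linarith [he 1 N le_rfl hN le_rfl]
  · linarith [he 1 i le_rfl hi' hiN]

lemma exists_sign_change (he : IsConvexChain e N) (hN : 1 < N) {j : ℕ} (hj : j ≤ N) :
    ∃ s, (∀ i, 1 ≤ i → i ≤ j → 0 < (e i).cross s) ∧
      ∀ i, j < i → i ≤ N → (e i).cross s < 0 := by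
  rcases Nat.eq_zero_or_pos j with rfl | hj0
  · exact ⟨e 1 - e N, by omega, fun i hi hiN => he.cross_sub_neg hN hi hiN⟩
  rcases hj.eq_or_lt with rfl | hjN
  · refine ⟨-(e 1 - e j), fun i hi hij => ?_, by omega⟩
    rw [Prod.cross_neg_right, neg_pos]
    exact he.cross_sub_neg hN hi hij
  refine ⟨e j + e (j + 1), fun i hi hij => ?_, fun i hji hiN => ?_⟩
  · rw [Prod.cross_add_right]
    linarith [he.cross_nonneg hi hij hjN.le, he i (j + 1) hi (by omega) hjN]
  · rw [Prod.cross_add_right, Prod.cross_swap (e j) (e i), Prod.cross_swap (e (j + 1)) (e i)]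
    linarith [he j i hj0 hji hiN, he.cross_nonneg (by omega) hji hiN]

lemma exists_cross_lt_partialSum (he : IsConvexChain e N) (hN : 1 < N) (hp0 : p 0 = 0)
    (hp : ∀ k < N, p (k + 1) = p k + e (k + 1)) {j : ℕ} (hj : j ≤ N) :
    ∃ s, (∀ i ≤ N, i ≠ j → (p i).cross s < (p j).cross s) ∧
      ∀ k, 0 < k → k < N → (p N - p k).cross s < (p j).cross s := by
  obtain ⟨s, hpos, hneg⟩ := he.exists_sign_change hN hj
  set g : ℕ → R := fun k => (p k).cross s
  have hstep : ∀ k < N, g (k + 1) = g k + (e (k + 1)).cross s := fun k hk => by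
    simp only [g, hp k hk, Prod.cross_add_left]
  have hmono : StrictMonoOn g (Iic j) := strictMonoOn_Iic_of_lt_succ fun k hk => by
    rw [Order.succ_eq_add_one, hstep k (by omega)]
    linarith [hpos (k + 1) (by omega) (by omega)]
  have hanti : StrictAntiOn g (Icc j N) := strictAntiOn_of_succ_lt ordConnected_Icc
    fun k _ hk hk1 => by
      rw [Order.succ_eq_add_one] at hk1 ⊢
      rw [hstep k hk1.2]
      linarith [hneg (k + 1) (Nat.lt_succ_of_le hk.1) hk1.2]
  have hg0 : g 0 = 0 := by simp only [g, hp0, Prod.cross_zero_left]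
  refine ⟨s, fun i hi hij => ?_, fun k hk0 hkN => ?_⟩
  · rcases lt_or_gt_of_ne hij with h | h
    · exact hmono (mem_Iic.2 h.le) (mem_Iic.2 le_rfl) h
    · exact hanti ⟨le_rfl, hj⟩ ⟨h.le, hi⟩ h
  · rw [Prod.cross_sub_left]
    have hNj : g N ≤ g j := hanti.antitoneOn ⟨le_rfl, hj⟩ ⟨hj, le_rfl⟩ hj
    have h0j : g 0 ≤ g j := hmono.monotoneOn (mem_Iic.2 (Nat.zero_le j)) (mem_Iic.2 le_rfl)
      (Nat.zero_le j)
    rcases le_or_gt j k with h | h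
    · linarith [hanti ⟨h, hkN.le⟩ ⟨h.trans hkN.le, le_rfl⟩ hkN]
    · linarith [hmono (mem_Iic.2 (Nat.zero_le j)) (mem_Iic.2 h.le) hk0]

lemma exists_cross_lt (he : IsConvexChain e N) (hN : 1 < N) (hp0 : p 0 = 0)
    (hp : ∀ k < N, p (k + 1) = p k + e (k + 1)) {q : R × R} (hq : q ∈ polygonVertices p N) :
    ∃ s, ∀ w ∈ polygonVertices p N, w ≠ q → w.cross s < q.cross s := by
  have hvertex : ∀ j ≤ N, ∃ s, ∀ w ∈ polygonVertices p N, w ≠ p j →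
      w.cross s < (p j).cross s := by
    intro j hj
    obtain ⟨s, hchain, hreflected⟩ := he.exists_cross_lt_partialSum hN hp0 hp hj
    refine ⟨s, ?_⟩
    rintro _ (⟨i, hi, rfl⟩ | ⟨k, hk, rfl⟩) hne
    · exact hchain i hi fun h => hne (by rw [h])
    · exact hreflected k hk.1 hk.2
  rcases hq with ⟨j, hj, rfl⟩ | ⟨j, hj, rfl⟩
  · exact hvertex j hj
  obtain ⟨s, hs⟩ := hvertex j hj.2.le
  refine ⟨-s, fun w hw hne => ?_⟩
  have hreflected := hs (p N - w) (sub_mem_polygonVertices hp0 hw) fun h => hne <| by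
    simp only [← h, sub_sub_cancel]
  simp only [Prod.cross_neg_right, Prod.cross_sub_left] at hreflected ⊢
  linarith

lemma ncard_polygonVertices (he : IsConvexChain e N) (hN : 1 < N) (hp0 : p 0 = 0)
    (hp : ∀ k < N, p (k + 1) = p k + e (k + 1)) : (polygonVertices p N).ncard = 2 * N := by
  have hinj : InjOn p (Iic N) := fun i hi j hj hij => by
    by_contra hne
    obtain ⟨s, hs, -⟩ := he.exists_cross_lt_partialSum hN hp0 hp hj
    exact (hs i hi hne).ne (by rw [hij])
  have hinj' : InjOn (fun k => p N - p k) (Ioo 0 N) := fun i hi j hj hij =>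
    hinj (mem_Iic.2 hi.2.le) (mem_Iic.2 hj.2.le) (sub_right_injective hij)
  have hdisj : Disjoint (p '' Iic N) ((fun k => p N - p k) '' Ioo 0 N) := by
    refine disjoint_left.2 ?_
    rintro _ ⟨j, hj, rfl⟩ ⟨k, hk, hkj⟩
    obtain ⟨s, -, hs⟩ := he.exists_cross_lt_partialSum hN hp0 hp hj
    exact (hs k hk.1 hk.2).ne (congrArg (·.cross s) hkj)
  rw [polygonVertices, ncard_union_eq hdisj ((finite_Iic N).image _) ((finite_Ioo 0 N).image _),
    hinj.ncard_image, hinj'.ncard_image, ncard_Iic_nat, ncard_Ioo_nat]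
  omega

lemma notMem_convexHull_polygonVertices_diff (he : IsConvexChain e N) (hN : 1 < N)
    (hp0 : p 0 = 0) (hp : ∀ k < N, p (k + 1) = p k + e (k + 1)) {v : R × R}
    (hv : v ∈ polygonVertices p N) : v ∉ convexHull R (polygonVertices p N \ {v}) :=
  let ⟨_, hs⟩ := he.exists_cross_lt hN hp0 hp hv
  notMem_convexHull_of_forall_cross_lt fun w hw => hs w hw.1 hw.2

end IsConvexChain

end ConvexChain

def walkIndex (n k : ℕ) : ℤ := if k ≤ n + 1 then 2 * k - 3 else 2 * (2 * n + 2 - k)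

lemma isConvexChain_of_eq_fibVec {n : ℕ} {e : ℕ → ℤ × ℤ}
    (he : ∀ k, 1 ≤ k → k ≤ 2 * n + 2 → e k = fibVec (walkIndex n k)) :
    IsConvexChain e (2 * n + 2) := by
  intro i k hi hik hk
  rw [he i hi (by omega), he k (by omega) hk, walkIndex, walkIndex]
  have hodd : Odd (2 * (i : ℤ) - 3) := ⟨i - 2, by ring⟩
  have heven : Even (2 * (2 * n + 2 - k : ℤ)) := even_two_mul _
  split_ifs with hin hkn hkn
  · exact cross_fibVec_pos_of_odd hodd (by omega)
  · rcases lt_or_gt_of_ne (show 2 * (i : ℤ) - 3 ≠ 2 * (2 * n + 2 - k) by omega) with h | h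
    · exact cross_fibVec_pos_of_odd hodd h
    · exact cross_fibVec_pos_of_even heven h
  · omega
  · exact cross_fibVec_pos_of_even heven (by omega)

lemma natCast_eq_fib {f : ℕ → ℕ} (hf0 : f 0 = 1) (hf1 : f 1 = 1)
    (hf : ∀ m, f (m + 2) = f (m + 1) + f m) (m : ℕ) : (f m : ℤ) = Int.fib (m + 1) := by
  suffices f m = Nat.fib (m + 1) by rw [this]; exact_mod_cast (Int.fib_natCast (m + 1)).symm
  induction m using Nat.twoStepInduction with
  | zero => exact hf0
  | one => exact hf1
  | more m ih₀ ih₁ => rw [hf, ih₀, ih₁, add_comm]; exact (Nat.fib_add_two (n := m + 1)).symm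

lemma walk_edge_eq_fibVec {n : ℕ} {f : ℕ → ℕ} (hfib : ∀ m, (f m : ℤ) = Int.fib (m + 1))
    {P : ℕ → ℤ × ℤ} (hP1 : P 1 = (1, 0))
    (hPA : ∀ k, 2 ≤ k → k ≤ n + 1 →
      P k = ((f (2 * (k - 1) - 2) : ℤ), (f (2 * (k - 1) - 1) : ℤ)))
    (hPB : ∀ k, n + 2 ≤ k → k ≤ 2 * n + 1 →
      P k = ((f (2 * (2 * n + 2 - k) - 1) : ℤ), (f (2 * (2 * n + 2 - k)) : ℤ)))
    (hPlast : P (2 * n + 2) = (0, 1)) {k : ℕ} (hk1 : 1 ≤ k) (hk2 : k ≤ 2 * n + 2) :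
    P k = fibVec (walkIndex n k) := by
  rw [walkIndex, fibVec]
  split_ifs with hkn
  · rcases hk1.eq_or_lt with rfl | hk1
    · norm_num [hP1]
    rw [hPA k hk1 hkn, hfib, hfib]
    congr 2 <;> omega
  · rcases hk2.eq_or_lt with rfl | hk2
    · norm_num [hPlast]
    rw [hPB k (by omega) (by omega), hfib, hfib]
    congr 2 <;> omega

theorem convex_hull_vertices_of_walk_general
    (n : ℕ)
    (f : ℕ → ℕ) (hf0 : f 0 = 1) (hf1 : f 1 = 1)
    (hf : ∀ m, f (m + 2) = f (m + 1) + f m)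
    (P : ℕ → ℤ × ℤ)
    (hP1 : P 1 = (1, 0))
    (hPA : ∀ k, 2 ≤ k → k ≤ n + 1 →
      P k = ((f (2 * (k - 1) - 2) : ℤ), (f (2 * (k - 1) - 1) : ℤ)))
    (hPB : ∀ k, n + 2 ≤ k → k ≤ 2 * n + 1 →
      P k = ((f (2 * (2 * n + 2 - k) - 1) : ℤ), (f (2 * (2 * n + 2 - k)) : ℤ)))
    (hPlast : P (2 * n + 2) = (0, 1))
    (p : ℕ → ℤ × ℤ)
    (hp0 : p 0 = (0, 0))
    (hp : ∀ k, 1 ≤ k → k ≤ 2 * n + 2 → p k = p (k - 1) + P k)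
    (S : Set (ℝ × ℝ))
    (hS : S = (fun v : ℤ × ℤ => ((v.1 : ℝ), (v.2 : ℝ))) ''
      ({p k | k ≤ 2 * n + 2} ∪ {p (2 * n + 2) - p k | k ∈ Set.Ioo 0 (2 * n + 2)})) :
    (∀ v ∈ S, (2 : ℝ) • ((1 / 2 : ℝ) • ((↑(p (2 * n + 2)).1 : ℝ), (↑(p (2 * n + 2)).2 : ℝ))) - v ∈ S) ∧
    S.ncard = 4 * n + 4 ∧
    ∀ v ∈ S, v ∉ convexHull ℝ (S \ {v}) := by
  set ι := (Int.castRingHom ℝ).prodMap (Int.castRingHom ℝ)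
  have hchain : IsConvexChain (ι ∘ P) (2 * n + 2) :=
    (isConvexChain_of_eq_fibVec fun k hk1 hk2 =>
      walk_edge_eq_fibVec (natCast_eq_fib hf0 hf1 hf) hP1 hPA hPB hPlast hk1 hk2).map _
      Int.cast_strictMono
  have hN : 1 < 2 * n + 2 := by omega
  have hq0 : (ι ∘ p) 0 = 0 := by simp [ι, hp0]
  have hq : ∀ k < 2 * n + 2, (ι ∘ p) (k + 1) = (ι ∘ p) k + (ι ∘ P) (k + 1) :=
    fun k hk => by simp [hp (k + 1) (by omega) hk]
  have hSq : S = polygonVertices (ι ∘ p) (2 * n + 2) := by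
    rw [← image_polygonVertices, hS]; rfl
  rw [hSq]
  refine ⟨fun v hv => ?_, ?_, fun v hv =>
    hchain.notMem_convexHull_polygonVertices_diff hN hq0 hq hv⟩
  · rw [smul_smul, mul_one_div_cancel two_ne_zero, one_smul]
    exact sub_mem_polygonVertices hq0 hv
  · rw [hchain.ncard_polygonVertices hN hq0 hq]
    ring

/-- The vertex set of the convex hull `C n` from the paper: the partial sums `p k` of the
edge-vector list `P n`, together with their images under the point symmetry
`Θ n : v ↦ p (2n+2) - v`.  The set is centrally symmetric about `(1/2) p (2n+2)`, has
exactly `4n+4` points, and every point is an extreme point of its convex hull. -/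
theorem convex_hull_vertices_of_walk
    (n : ℕ) (hn : 1 ≤ n)
    (f : ℕ → ℕ) (hf0 : f 0 = 1) (hf1 : f 1 = 1)
    (hf : ∀ m, f (m + 2) = f (m + 1) + f m)
    (P : ℕ → ℤ × ℤ)
    (hP1 : P 1 = (1, 0))
    (hPA : ∀ k, 2 ≤ k → k ≤ n + 1 →
      P k = ((f (2 * (k - 1) - 2) : ℤ), (f (2 * (k - 1) - 1) : ℤ)))
    (hPB : ∀ k, n + 2 ≤ k → k ≤ 2 * n + 1 →
      P k = ((f (2 * (2 * n + 2 - k) - 1) : ℤ), (f (2 * (2 * n + 2 - k)) : ℤ)))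
    (hPlast : P (2 * n + 2) = (0, 1))
    (p : ℕ → ℤ × ℤ)
    (hp0 : p 0 = (0, 0))
    (hp : ∀ k, 1 ≤ k → k ≤ 2 * n + 2 → p k = p (k - 1) + P k)
    (S : Set (ℝ × ℝ))
    (hS : S = (fun v : ℤ × ℤ => ((v.1 : ℝ), (v.2 : ℝ))) ''
      ({p k | k ≤ 2 * n + 2} ∪ {p (2 * n + 2) - p k | k ∈ Set.Ioo 0 (2 * n + 2)})) :
    (∀ v ∈ S, (2 : ℝ) • ((1 / 2 : ℝ) • ((↑(p (2 * n + 2)).1 : ℝ), (↑(p (2 * n + 2)).2 : ℝ))) - v ∈ S) ∧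
    S.ncard = 4 * n + 4 ∧
    ∀ v ∈ S, v ∉ convexHull ℝ (S \ {v}) :=
  convex_hull_vertices_of_walk_general n f hf0 hf1 hf P hP1 hPA hPB hPlast p hp0 hp S hS
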